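/- (Second Dugundji-type theorem) Let S be either the system Tmd or the system Tm4d. Then S cannot be characterized by a single finite deterministic logical matrix: there is no deterministic logical matrix (M, D) over {¬,→,□} with M finite such that both (a) Γ ⊢_S α implies Γ ⊨_M α for all sets of formulas Γ and formulas α, and (b) every formula valid in (M,D) is a theorem of S. -/
import Mathlib


/- ## Syntax of the modal language -/

inductive Form : Type
  | var : Nat → Form
  | neg : Form → Form
  | imp : Form → Form → Form
  | box : Form → Form
  deriving DecidableEq

namespace Form
/-- ◇α := ¬□¬α -/
def dia (α : Form) : Form := neg (box (neg α))
/-- α∨β := ¬α→β -/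
def disj (α β : Form) : Form := imp (neg α) β
/-- α∧β := ¬(α→¬β) -/
def conj (α β : Form) : Form := neg (imp α (neg β))
end Form

open Form

/-- Substitution instances of classical tautologies over {¬,→}: formulas true under
every Boolean assignment that respects negation and implication. -/
def Taut (φ : Form) : Prop :=
  ∀ v : Form → Bool,
    (∀ α, v (Form.neg α) = !(v α)) →
    (∀ α β, v (Form.imp α β) = (!(v α) || v β)) →
    v φ = true

/-- Hilbert-style derivations from a set of premises, with Modus Ponens as the only
inference rule, given a set `Ax` of axioms. -/
inductive Deriv (Ax : Form → Prop) (Γ : Set Form) : Form → Prop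
  | prem {φ : Form} : φ ∈ Γ → Deriv Ax Γ φ
  | ax {φ : Form} : Ax φ → Deriv Ax Γ φ
  | mp {φ ψ : Form} : Deriv Ax Γ (Form.imp φ ψ) → Deriv Ax Γ φ → Deriv Ax Γ ψ

/- ## Axiom schemas -/

def axK (α β : Form) : Form := (box (α.imp β)).imp ((box α).imp (box β))
def axK1 (α β : Form) : Form := (box (α.imp β)).imp ((dia α).imp (dia β))
def axK2 (α β : Form) : Form := (dia (α.imp β)).imp ((box α).imp (dia β))
def axM1 (α β : Form) : Form := (Form.neg (dia α)).imp (box (α.imp β))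
def axM2 (α β : Form) : Form := (box β).imp (box (α.imp β))
def axM3 (α β : Form) : Form := (dia β).imp (dia (α.imp β))
def axM4 (α β : Form) : Form := (dia (Form.neg α)).imp (dia (α.imp β))
def axT (α : Form) : Form := (box α).imp α
def axD (α : Form) : Form := (box α).imp (dia α)
def axDN1 (α : Form) : Form := (box α).imp (box (Form.neg (Form.neg α)))
def axDN2 (α : Form) : Form := (box (Form.neg (Form.neg α))).imp (box α)
def ax4 (α : Form) : Form := (box α).imp (box (box α))
def ax5 (α : Form) : Form := (dia (box α)).imp (box α)
def axKdet (α β : Form) : Form := (box (α.imp β)).imp ((dia α).imp (box β))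

def axK' (α β : Form) : Form := (dia α).imp (axK α β)
def axK1' (α β : Form) : Form := (dia (Form.neg β)).imp (axK1 α β)
def axK2' (α β : Form) : Form := (dia α).imp (axK2 α β)
def axM3' (α β : Form) : Form := ((dia α).disj (dia (Form.neg α))).imp (axM3 α β)
def axM4' (α β : Form) : Form := (dia (Form.neg β)).imp (axM4 α β)
def axI1 (α β : Form) : Form :=
  ((box α).conj (box (Form.neg α))).imp ((box (α.imp β)).conj (box (Form.neg (α.imp β))))
def axI2 (α β : Form) : Form :=
  ((box β).conj (box (Form.neg β))).imp ((box (α.imp β)).conj (box (Form.neg (α.imp β))))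

/-- The recovery operator ∘α := □α→◇α. -/
def circm (α : Form) : Form := (box α).imp (dia α)
/-- •α := ¬∘α. -/
def bulm (α : Form) : Form := Form.neg (circm α)
/-- The recovery operator ∘'α := (□α→α)∧(□¬α→¬α). -/
def circm' (α : Form) : Form :=
  ((box α).imp α).conj ((box (Form.neg α)).imp (Form.neg α))

/- ## Hilbert calculi -/

/-- The system Km. -/
inductive KmAx : Form → Prop
  | pc {φ : Form} : Taut φ → KmAx φ
  | k' (α β : Form) : KmAx (axK' α β)
  | k1' (α β : Form) : KmAx (axK1' α β)
  | k2' (α β : Form) : KmAx (axK2' α β)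
  | m1 (α β : Form) : KmAx (axM1 α β)
  | m2 (α β : Form) : KmAx (axM2 α β)
  | m3' (α β : Form) : KmAx (axM3' α β)
  | m4' (α β : Form) : KmAx (axM4' α β)
  | i1 (α β : Form) : KmAx (axI1 α β)
  | i2 (α β : Form) : KmAx (axI2 α β)
  | dn1 (α : Form) : KmAx (axDN1 α)
  | dn2 (α : Form) : KmAx (axDN2 α)

/-- The system K4m = Km + (4). -/
inductive K4mAx : Form → Prop
  | km {φ : Form} : KmAx φ → K4mAx φ
  | four (α : Form) : K4mAx (ax4 α)

/-- The system K45m = Km + (4) + (5). -/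
inductive K45mAx : Form → Prop
  | km {φ : Form} : KmAx φ → K45mAx φ
  | four (α : Form) : K45mAx (ax4 α)
  | five (α : Form) : K45mAx (ax5 α)

/-- The system Dm. -/
inductive DmAx : Form → Prop
  | pc {φ : Form} : Taut φ → DmAx φ
  | k (α β : Form) : DmAx (axK α β)
  | k1 (α β : Form) : DmAx (axK1 α β)
  | k2 (α β : Form) : DmAx (axK2 α β)
  | m1 (α β : Form) : DmAx (axM1 α β)
  | m2 (α β : Form) : DmAx (axM2 α β)
  | m3 (α β : Form) : DmAx (axM3 α β)
  | m4 (α β : Form) : DmAx (axM4 α β)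
  | d (α : Form) : DmAx (axD α)
  | dn1 (α : Form) : DmAx (axDN1 α)
  | dn2 (α : Form) : DmAx (axDN2 α)

/-- The system Tm. -/
inductive TmAx : Form → Prop
  | pc {φ : Form} : Taut φ → TmAx φ
  | k (α β : Form) : TmAx (axK α β)
  | k1 (α β : Form) : TmAx (axK1 α β)
  | k2 (α β : Form) : TmAx (axK2 α β)
  | m1 (α β : Form) : TmAx (axM1 α β)
  | m2 (α β : Form) : TmAx (axM2 α β)
  | m3 (α β : Form) : TmAx (axM3 α β)
  | m4 (α β : Form) : TmAx (axM4 α β)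
  | t (α : Form) : TmAx (axT α)
  | dn1 (α : Form) : TmAx (axDN1 α)
  | dn2 (α : Form) : TmAx (axDN2 α)

/-- The system T45m = Tm + (4) + (5). -/
inductive T45mAx : Form → Prop
  | tm {φ : Form} : TmAx φ → T45mAx φ
  | four (α : Form) : T45mAx (ax4 α)
  | five (α : Form) : T45mAx (ax5 α)

/-- The system Tmd: Tm with (K1) replaced by (Kdet). -/
inductive TmdAx : Form → Prop
  | pc {φ : Form} : Taut φ → TmdAx φ
  | k (α β : Form) : TmdAx (axK α β)
  | kdet (α β : Form) : TmdAx (axKdet α β)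
  | k2 (α β : Form) : TmdAx (axK2 α β)
  | m1 (α β : Form) : TmdAx (axM1 α β)
  | m2 (α β : Form) : TmdAx (axM2 α β)
  | m3 (α β : Form) : TmdAx (axM3 α β)
  | m4 (α β : Form) : TmdAx (axM4 α β)
  | t (α : Form) : TmdAx (axT α)
  | dn1 (α : Form) : TmdAx (axDN1 α)
  | dn2 (α : Form) : TmdAx (axDN2 α)

/-- The system Tm4d = Tmd + (4). -/
inductive Tm4dAx : Form → Prop
  | tmd {φ : Form} : TmdAx φ → Tm4dAx φ
  | four (α : Form) : Tm4dAx (ax4 α)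

/-- The system Tm + (Kdet). -/
inductive TmKdetAx : Form → Prop
  | tm {φ : Form} : TmAx φ → TmKdetAx φ
  | kdet (α β : Form) : TmKdetAx (axKdet α β)

/-- The system Km∘. -/
inductive KmCircAx : Form → Prop
  | pc {φ : Form} : Taut φ → KmCircAx φ
  | k'' (α β : Form) : KmCircAx ((circm α).imp (axK α β))
  | k1'' (α β : Form) : KmCircAx ((circm β).imp (axK1 α β))
  | k2'' (α β : Form) : KmCircAx ((circm α).imp (axK2 α β))
  | m1 (α β : Form) : KmCircAx (axM1 α β)
  | m2 (α β : Form) : KmCircAx (axM2 α β)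
  | m3'' (α β : Form) : KmCircAx ((circm α).imp (axM3 α β))
  | m4'' (α β : Form) : KmCircAx ((circm β).imp (axM4 α β))
  | i1' (α β : Form) : KmCircAx ((bulm α).imp (bulm (α.imp β)))
  | i2' (α β : Form) : KmCircAx ((bulm β).imp (bulm (α.imp β)))
  | dn1 (α : Form) : KmCircAx (axDN1 α)
  | dn2 (α : Form) : KmCircAx (axDN2 α)

/- ## The eight-valued non-deterministic semantics -/

/-- The modal "letters" T, C, F, I. -/
inductive Ltr : Type
  | T | C | F | I
  deriving DecidableEq

/-- An eight-valued truth-value: a letter together with a sign (`true` = +). -/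
structure V8 where
  ltr : Ltr
  sgn : Bool
  deriving DecidableEq

/-- Designated values: those with sign +. -/
def V8.desig (x : V8) : Prop := x.sgn = true

/-- Letter of the negation. -/
def lneg : Ltr → Ltr
  | .T => .F
  | .C => .C
  | .F => .T
  | .I => .I

/-- The (deterministic) multioperator for ¬. -/
def neg8 (x : V8) : Set V8 := {⟨lneg x.ltr, !x.sgn⟩}

/-- Set of possible letters of an implication, given the letters of the components. -/
def limp : Ltr → Ltr → Set Ltr
  | .I, _ => {Ltr.I}
  | .T, .I => {Ltr.I}
  | .C, .I => {Ltr.I}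
  | .F, .I => {Ltr.I}
  | .T, .T => {Ltr.T}
  | .T, .C => {Ltr.C}
  | .T, .F => {Ltr.F}
  | .C, .T => {Ltr.T}
  | .C, .C => {Ltr.T, Ltr.C}
  | .C, .F => {Ltr.C}
  | .F, .T => {Ltr.T}
  | .F, .C => {Ltr.T}
  | .F, .F => {Ltr.T}

/-- The multioperator for →: sign is material implication of the signs, letter as in `limp`. -/
def imp8 (x y : V8) : Set V8 :=
  { z | z.ltr ∈ limp x.ltr y.ltr ∧ z.sgn = (!x.sgn || y.sgn) }

/-- The multioperator for □ in (the Nmatrix for) Km. -/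
def box8Km (x : V8) : Set V8 :=
  if x.ltr = Ltr.T ∨ x.ltr = Ltr.I then { z | z.sgn = true } else { z | z.sgn = false }

/-- The multioperator for □ in the Nmatrix for K4m. -/
def box8K4m (x : V8) : Set V8 :=
  if x.ltr = Ltr.T ∨ x.ltr = Ltr.I then ({⟨Ltr.T, true⟩, ⟨Ltr.I, true⟩} : Set V8)
  else { z | z.sgn = false }

/-- The multioperator for □ in the Nmatrix for K45m. -/
def box8K45m (x : V8) : Set V8 :=
  if x.ltr = Ltr.T ∨ x.ltr = Ltr.I then ({⟨Ltr.T, true⟩, ⟨Ltr.I, true⟩} : Set V8)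
  else ({⟨Ltr.F, false⟩, ⟨Ltr.I, false⟩} : Set V8)

/-- A valuation over the eight-valued Nmatrix with the given □-multioperator. -/
def IsVal8 (boxOp : V8 → Set V8) (v : Form → V8) : Prop :=
  (∀ α, v (Form.neg α) ∈ neg8 (v α)) ∧
  (∀ α β, v (Form.imp α β) ∈ imp8 (v α) (v β)) ∧
  (∀ α, v (Form.box α) ∈ boxOp (v α))

/-- Semantic consequence over the eight-valued Nmatrix with the given □-multioperator. -/
def NmEntails (boxOp : V8 → Set V8) (Γ : Set Form) (φ : Form) : Prop :=
  ∀ v : Form → V8, IsVal8 boxOp v → (∀ γ ∈ Γ, (v γ).desig) → (v φ).desig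

/- ## Multialgebras -/

/-- A multialgebra over {¬,→,□}, presented on the carrier `V8` with a chosen domain. -/
structure MAlg where
  dom : Set V8
  negOp : V8 → Set V8
  impOp : V8 → V8 → Set V8
  boxOp : V8 → Set V8

/-- `A` is a submultialgebra of `B`. -/
def SubMAlg (A B : MAlg) : Prop :=
  A.dom ⊆ B.dom ∧
  (∀ x ∈ A.dom, A.negOp x ⊆ B.negOp x) ∧
  (∀ x ∈ A.dom, ∀ y ∈ A.dom, A.impOp x y ⊆ B.impOp x y) ∧
  (∀ x ∈ A.dom, A.boxOp x ⊆ B.boxOp x)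

/-- Domain of the Nmatrix for Dm: the six non-I values. -/
def domDm : Set V8 := { x | x.ltr ≠ Ltr.I }

/-- Domain of the Nmatrix for Tm: {T+, C+, C−, F−}. -/
def domTm : Set V8 :=
  ({⟨Ltr.T, true⟩, ⟨Ltr.C, true⟩, ⟨Ltr.C, false⟩, ⟨Ltr.F, false⟩} : Set V8)

/-- The multialgebra underlying the Nmatrix for Km. -/
def A_Km : MAlg := ⟨Set.univ, neg8, imp8, box8Km⟩

/-- The □-multioperator of Dm: T ↦ {T+,C+,F+}, C∪F ↦ {T−,C−,F−}. -/
def boxDm (x : V8) : Set V8 :=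
  if x.ltr = Ltr.T then { z | z.sgn = true } ∩ domDm else { z | z.sgn = false } ∩ domDm

/-- The multialgebra underlying the Nmatrix for Dm. -/
def A_Dm : MAlg :=
  ⟨domDm, fun x => neg8 x ∩ domDm, fun x y => imp8 x y ∩ domDm, boxDm⟩

/-- The □-multioperator of Tm: T+ ↦ {T+,C+}, and C+, C−, F− ↦ {C−,F−}. -/
def boxTm (x : V8) : Set V8 :=
  if x = ⟨Ltr.T, true⟩ then ({⟨Ltr.T, true⟩, ⟨Ltr.C, true⟩} : Set V8)
  else ({⟨Ltr.C, false⟩, ⟨Ltr.F, false⟩} : Set V8)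

/-- The multialgebra underlying the Nmatrix for Tm. -/
def A_Tm : MAlg :=
  ⟨domTm, fun x => neg8 x ∩ domTm, fun x y => imp8 x y ∩ domTm, boxTm⟩

/- ## The four-valued Nmatrix for Tmd -/

/-- The four values T+, C+, C−, F−. -/
inductive V4 : Type
  | Tp | Cp | Cm | Fm
  deriving DecidableEq

/-- Designated values of the Tmd Nmatrix: T+ and C+. -/
def V4.desig (x : V4) : Prop := x = V4.Tp ∨ x = V4.Cp

/-- Negation: deterministic. -/
def neg4 : V4 → V4
  | .Tp => .Fm
  | .Cp => .Cm
  | .Cm => .Cp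
  | .Fm => .Tp

/-- Position in the chain F− < C− < C+ < T+. -/
def rank4 : V4 → Nat
  | .Fm => 0
  | .Cm => 1
  | .Cp => 2
  | .Tp => 3

def ofRank4 : Nat → V4
  | 0 => .Fm
  | 1 => .Cm
  | 2 => .Cp
  | _ => .Tp

/-- The deterministic implication of Tmd: x→y is the maximum of ¬x and y in the chain. -/
def imp4 (x y : V4) : V4 := ofRank4 (max (rank4 (neg4 x)) (rank4 y))

/-- The □-multioperator of Tmd: T+ ↦ {T+,C+}; C+, C−, F− ↦ {C−,F−}. -/
def box4 (x : V4) : Set V4 :=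
  if x = V4.Tp then ({V4.Tp, V4.Cp} : Set V4) else ({V4.Cm, V4.Fm} : Set V4)

/-- A valuation over the Nmatrix for Tmd. -/
def IsVal4 (v : Form → V4) : Prop :=
  (∀ α, v (Form.neg α) = neg4 (v α)) ∧
  (∀ α β, v (Form.imp α β) = imp4 (v α) (v β)) ∧
  (∀ α, v (Form.box α) ∈ box4 (v α))

/-- Semantic consequence over the Nmatrix for Tmd. -/
def TmdEntails (Γ : Set Form) (φ : Form) : Prop :=
  ∀ v : Form → V4, IsVal4 v → (∀ γ ∈ Γ, (v γ).desig) → (v φ).desig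

/- ## Deterministic logical matrices -/

/-- A deterministic logical matrix over the signature {¬,→,□}. -/
structure DetMatrix where
  carrier : Type
  negOp : carrier → carrier
  impOp : carrier → carrier → carrier
  boxOp : carrier → carrier
  desig : Set carrier

/-- A valuation (homomorphism) over a deterministic matrix. -/
def DetMatrix.IsVal (Mat : DetMatrix) (h : Form → Mat.carrier) : Prop :=
  (∀ α, h (Form.neg α) = Mat.negOp (h α)) ∧
  (∀ α β, h (Form.imp α β) = Mat.impOp (h α) (h β)) ∧
  (∀ α, h (Form.box α) = Mat.boxOp (h α))

/-- Semantic consequence over a deterministic matrix. -/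
def DetMatrix.Entails (Mat : DetMatrix) (Γ : Set Form) (φ : Form) : Prop :=
  ∀ h : Form → Mat.carrier, Mat.IsVal h → (∀ γ ∈ Γ, h γ ∈ Mat.desig) → h φ ∈ Mat.desig

/-- Validity in a deterministic matrix. -/
def DetMatrix.Valid (Mat : DetMatrix) (φ : Form) : Prop :=
  ∀ h : Form → Mat.carrier, Mat.IsVal h → h φ ∈ Mat.desig

/- ## The Dugundji formulas δ(m) -/

/-- Left-associated disjunction of a nonempty list of formulas. -/
def bigOr : List Form → Form
  | [] => Form.var 0
  | a :: l => l.foldl Form.disj a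

/-- α(m): the left-associated disjunction of the variables p_1, …, p_m. -/
def alphaF (m : Nat) : Form := bigOr ((List.range m).map Form.var)

/-- β_i(m): the left-associated disjunction of p_1, …, p_m with p_i omitted. -/
def betaF (m i : Nat) : Form :=
  bigOr (((List.range m).filter (fun j => j != i)).map Form.var)

/-- δ(m): the left-associated disjunction of the formulas □α(m)→□β_i(m), 1 ≤ i ≤ m. -/
def deltaF (m : Nat) : Form :=
  bigOr ((List.range m).map (fun i => (Form.box (alphaF m)).imp (Form.box (betaF m i))))

/- ## Auxiliary machinery for the second Dugundji-type theorem -/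

instance : Fintype V4 :=
  ⟨⟨{V4.Tp, V4.Cp, V4.Cm, V4.Fm}, by decide⟩, by intro x; cases x <;> decide⟩

instance (x : V4) : Decidable x.desig := by unfold V4.desig; infer_instance

/-- Membership in the □-multioperator for Tm4d: T+ ↦ {T+}, others ↦ {C−,F−}. -/
def bmem (a x : V4) : Prop :=
  if a = V4.Tp then x = V4.Tp else (x = V4.Cm ∨ x = V4.Fm)

instance (a x : V4) : Decidable (bmem a x) := by unfold bmem; infer_instance

/-- Valuations over the refined Nmatrix (negation and implication deterministic,
box nondeterministic via `bmem`). -/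
def MyIsVal (v : Form → V4) : Prop :=
  (∀ α, v (Form.neg α) = neg4 (v α)) ∧
  (∀ α β, v (Form.imp α β) = imp4 (v α) (v β)) ∧
  (∀ α, bmem (v α) (v (Form.box α)))

def dsg : V4 → Bool
  | .Tp => true
  | .Cp => true
  | _ => false

lemma dsg_iff (x : V4) : dsg x = true ↔ x.desig := by
  cases x <;> simp [dsg, V4.desig]

lemma dsg_neg (a : V4) : dsg (neg4 a) = !(dsg a) := by cases a <;> rfl

lemma dsg_imp (a b : V4) : dsg (imp4 a b) = (!(dsg a) || dsg b) := by cases a <;> cases b <;> rfl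

lemma v4_mp : ∀ a b : V4, (imp4 a b).desig → a.desig → b.desig := by decide

lemma lemK : ∀ a b x y z : V4, bmem (imp4 a b) x → bmem a y → bmem b z →
    (imp4 x (imp4 y z)).desig := by decide

lemma lemKdet : ∀ a b x w z : V4, bmem (imp4 a b) x → bmem (neg4 a) w → bmem b z →
    (imp4 x (imp4 (neg4 w) z)).desig := by decide

lemma lemK2 : ∀ a b u y w : V4, bmem (neg4 (imp4 a b)) u → bmem a y → bmem (neg4 b) w →
    (imp4 (neg4 u) (imp4 y (neg4 w))).desig := by decide

lemma lemM1 : ∀ a b w x : V4, bmem (neg4 a) w → bmem (imp4 a b) x →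
    (imp4 (neg4 (neg4 w)) x).desig := by decide

lemma lemM2 : ∀ a b z x : V4, bmem b z → bmem (imp4 a b) x →
    (imp4 z x).desig := by decide

lemma lemM3 : ∀ a b w u : V4, bmem (neg4 b) w → bmem (neg4 (imp4 a b)) u →
    (imp4 (neg4 w) (neg4 u)).desig := by decide

lemma lemM4 : ∀ a b w u : V4, bmem (neg4 (neg4 a)) w → bmem (neg4 (imp4 a b)) u →
    (imp4 (neg4 w) (neg4 u)).desig := by decide

lemma lemT : ∀ a y : V4, bmem a y → (imp4 y a).desig := by decide

lemma lemDN1 : ∀ a y t : V4, bmem a y → bmem (neg4 (neg4 a)) t →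
    (imp4 y t).desig := by decide

lemma lemDN2 : ∀ a y t : V4, bmem a y → bmem (neg4 (neg4 a)) t →
    (imp4 t y).desig := by decide

lemma lem4 : ∀ a y s : V4, bmem a y → bmem y s → (imp4 y s).desig := by decide

lemma deriv_mono {Ax Ax' : Form → Prop} (h : ∀ φ, Ax φ → Ax' φ) {Γ : Set Form} {φ : Form}
    (hd : Deriv Ax Γ φ) : Deriv Ax' Γ φ := by
  induction hd with
  | prem h' => exact .prem h'
  | ax h' => exact .ax (h _ h')
  | mp _ _ ih1 ih2 => exact .mp ih1 ih2

/-- Soundness of Tm4d (hence of Tmd) with respect to the refined Nmatrix. -/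
lemma deriv_sound {Γ : Set Form} {φ : Form} (hd : Deriv Tm4dAx Γ φ)
    (v : Form → V4) (hv : MyIsVal v) (hΓ : ∀ γ ∈ Γ, (v γ).desig) : (v φ).desig := by
  obtain ⟨hn, hi, hb⟩ := hv
  induction hd with
  | prem h' => exact hΓ _ h'
  | mp _ _ ih1 ih2 =>
    rename_i ψ χ _ _
    rw [hi] at ih1
    exact v4_mp _ _ ih1 ih2
  | ax h' =>
    have hbox : ∀ α β : Form, v (Form.box (α.imp β)) = v (Form.box (α.imp β)) := fun _ _ => rfl
    have core : ∀ ψ : Form, TmdAx ψ → (v ψ).desig := by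
      intro ψ hψ
      cases hψ with
      | pc ht =>
        have := ht (fun χ => dsg (v χ))
          (fun α => by show dsg (v α.neg) = !(dsg (v α)); rw [hn, dsg_neg])
          (fun α β => by
            show dsg (v (α.imp β)) = (!(dsg (v α)) || dsg (v β)); rw [hi, dsg_imp])
        exact (dsg_iff _).mp this
      | k α β =>
        have h1 := hb (α.imp β); rw [hi] at h1
        simp only [axK, hi]
        exact lemK _ _ _ _ _ h1 (hb α) (hb β)
      | kdet α β =>
        have h1 := hb (α.imp β); rw [hi] at h1
        have h2 := hb (Form.neg α); rw [hn] at h2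
        simp only [axKdet, Form.dia, hi, hn]
        exact lemKdet _ _ _ _ _ h1 h2 (hb β)
      | k2 α β =>
        have h1 := hb (Form.neg (α.imp β)); rw [hn, hi] at h1
        have h2 := hb (Form.neg β); rw [hn] at h2
        simp only [axK2, Form.dia, hi, hn]
        exact lemK2 _ _ _ _ _ h1 (hb α) h2
      | m1 α β =>
        have h1 := hb (Form.neg α); rw [hn] at h1
        have h2 := hb (α.imp β); rw [hi] at h2
        simp only [axM1, Form.dia, hi, hn]
        exact lemM1 _ _ _ _ h1 h2
      | m2 α β =>
        have h2 := hb (α.imp β); rw [hi] at h2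
        simp only [axM2, hi]
        exact lemM2 _ _ _ _ (hb β) h2
      | m3 α β =>
        have h1 := hb (Form.neg β); rw [hn] at h1
        have h2 := hb (Form.neg (α.imp β)); rw [hn, hi] at h2
        simp only [axM3, Form.dia, hi, hn]
        exact lemM3 _ _ _ _ h1 h2
      | m4 α β =>
        have h1 := hb (Form.neg (Form.neg α)); rw [hn, hn] at h1
        have h2 := hb (Form.neg (α.imp β)); rw [hn, hi] at h2
        simp only [axM4, Form.dia, hi, hn]
        exact lemM4 _ _ _ _ h1 h2
      | t α =>
        simp only [axT, hi]
        exact lemT _ _ (hb α)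
      | dn1 α =>
        have h1 := hb (Form.neg (Form.neg α)); rw [hn, hn] at h1
        simp only [axDN1, hi]
        exact lemDN1 _ _ _ (hb α) h1
      | dn2 α =>
        have h1 := hb (Form.neg (Form.neg α)); rw [hn, hn] at h1
        simp only [axDN2, hi]
        exact lemDN2 _ _ _ (hb α) h1
    cases h' with
    | tmd h'' => exact core _ h''
    | four α =>
      have h1 := hb (Form.box α)
      simp only [ax4, hi]
      exact lem4 _ _ _ (hb α) h1

/-- Iterated box. -/
def boxIter : Nat → Form → Form
  | 0, φ => φ
  | n+1, φ => Form.box (boxIter n φ)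

/-- Box-height of a formula. -/
def htF : Form → Nat
  | .box α => htF α + 1
  | _ => 0

lemma htF_boxIter (n : Nat) : htF (boxIter n (Form.var 0)) = n := by
  induction n with
  | zero => rfl
  | succ k ih => simp [boxIter, htF, ih]

def chiF (φ : Form) : Form := Form.box (Form.neg (Form.box φ))

def PsiF (A B : Form) : Form := Form.conj ((chiF A).imp (chiF B)) ((chiF B).imp (chiF A))

lemma taut_psi (X : Form) : Taut (PsiF X X) := by
  intro v hn hi
  simp only [PsiF, Form.conj, hn, hi]
  cases v (chiF X) <;> rfl

/-- The refuting valuation: variables get C+, box values chosen nondeterministically,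
with `Fm` exactly at `□(□^N p₀)`. -/
def myVal (N : Nat) : Form → V4
  | .var _ => .Cp
  | .neg α => neg4 (myVal N α)
  | .imp α β => imp4 (myVal N α) (myVal N β)
  | .box α =>
    if myVal N α = .Tp then .Tp
    else if α = boxIter N (Form.var 0) then .Fm else .Cm

lemma myVal_isVal (N : Nat) : MyIsVal (myVal N) := by
  refine ⟨fun α => rfl, fun α β => rfl, fun α => ?_⟩
  show bmem (myVal N α) (myVal N (Form.box α))
  simp only [myVal]
  unfold bmem
  split
  · simp_all
  · split <;> simp_all


lemma myVal_boxIter_ne (N k : Nat) : myVal N (boxIter k (Form.var 0)) ≠ V4.Tp := by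
  induction k with
  | zero => simp [boxIter, myVal]
  | succ m ih =>
    show (if myVal N (boxIter m (Form.var 0)) = .Tp then V4.Tp
      else if boxIter m (Form.var 0) = boxIter N (Form.var 0) then V4.Fm else V4.Cm) ≠ V4.Tp
    rw [if_neg ih]
    split <;> simp

lemma myVal_chiA (N : Nat) : myVal N (chiF (boxIter N (Form.var 0))) = V4.Tp := by
  have h1 : myVal N (Form.box (boxIter N (Form.var 0))) = V4.Fm := by
    show (if myVal N (boxIter N (Form.var 0)) = .Tp then V4.Tp
      else if boxIter N (Form.var 0) = boxIter N (Form.var 0) then V4.Fm else V4.Cm) = V4.Fm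
    rw [if_neg (myVal_boxIter_ne N N), if_pos rfl]
  show (if myVal N (Form.neg (Form.box (boxIter N (Form.var 0)))) = .Tp then V4.Tp
    else if _ = boxIter N (Form.var 0) then V4.Fm else V4.Cm) = V4.Tp
  have h2 : myVal N (Form.neg (Form.box (boxIter N (Form.var 0)))) = V4.Tp := by
    show neg4 (myVal N (Form.box (boxIter N (Form.var 0)))) = V4.Tp
    rw [h1]; rfl
  rw [if_pos h2]

lemma myVal_chiB (N K : Nat) (hK : 0 < K) :
    myVal N (chiF (boxIter (N + K) (Form.var 0))) = V4.Cm := by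
  have hne : boxIter (N + K) (Form.var 0) ≠ boxIter N (Form.var 0) := by
    intro h
    have := congrArg htF h
    rw [htF_boxIter, htF_boxIter] at this
    omega
  have h1 : myVal N (Form.box (boxIter (N + K) (Form.var 0))) = V4.Cm := by
    show (if myVal N (boxIter (N + K) (Form.var 0)) = .Tp then V4.Tp
      else if boxIter (N + K) (Form.var 0) = boxIter N (Form.var 0) then V4.Fm else V4.Cm) = V4.Cm
    rw [if_neg (myVal_boxIter_ne N (N + K)), if_neg hne]
  have h2 : myVal N (Form.neg (Form.box (boxIter (N + K) (Form.var 0)))) = V4.Cp := by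
    show neg4 (myVal N (Form.box (boxIter (N + K) (Form.var 0)))) = V4.Cp
    rw [h1]; rfl
  have h3 : Form.neg (Form.box (boxIter (N + K) (Form.var 0))) ≠ boxIter N (Form.var 0) := by
    cases N <;> simp [boxIter]
  show (if myVal N (Form.neg (Form.box (boxIter (N + K) (Form.var 0)))) = .Tp then V4.Tp
    else if _ = boxIter N (Form.var 0) then V4.Fm else V4.Cm) = V4.Cm
  rw [h2]
  rw [if_neg (by simp), if_neg h3]


/-- Second Dugundji-type theorem: neither Tmd nor Tm4d can be characterized by a
single finite deterministic logical matrix. -/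
theorem no_finite_matrix_Tmd_Tm4d (S : Form → Prop)
    (hS : S = TmdAx ∨ S = Tm4dAx) :
    ¬ ∃ Mat : DetMatrix, Finite Mat.carrier ∧
        (∀ (Γ : Set Form) (α : Form), Deriv S Γ α → Mat.Entails Γ α) ∧
        (∀ φ : Form, Mat.Valid φ → Deriv S ∅ φ) := by
  rintro ⟨Mat, hfin, ha, hb⟩
  have hsub : ∀ φ, S φ → Tm4dAx φ := by
    rcases hS with rfl | rfl
    · exact fun φ h => Tm4dAx.tmd h
    · exact fun φ h => h
  have hpc : ∀ φ, Taut φ → S φ := by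
    rcases hS with rfl | rfl
    · exact fun φ h => TmdAx.pc h
    · exact fun φ h => Tm4dAx.tmd (TmdAx.pc h)
  haveI := hfin
  obtain ⟨i, j, hij, hfe⟩ :=
    Finite.exists_ne_map_eq_of_infinite (fun n : ℕ => Mat.boxOp^[n])
  obtain ⟨N, K, hK, hNK⟩ : ∃ N K, 0 < K ∧ Mat.boxOp^[N + K] = Mat.boxOp^[N] := by
    rcases hij.lt_or_gt with h | h
    · exact ⟨i, j - i, by omega, by rw [show i + (j - i) = j by omega]; exact hfe.symm⟩
    · exact ⟨j, i - j, by omega, by rw [show j + (i - j) = i by omega]; exact hfe⟩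
  set A := boxIter N (Form.var 0) with hA
  set B := boxIter (N + K) (Form.var 0) with hB
  have hθ : Deriv S ∅ (PsiF A A) := Deriv.ax (hpc _ (taut_psi A))
  have hvalid : Mat.Valid (PsiF A B) := by
    intro h hv
    obtain ⟨hn, hi, hbx⟩ := hv
    have hiter : ∀ n : ℕ, h (boxIter n (Form.var 0)) = Mat.boxOp^[n] (h (Form.var 0)) := by
      intro n
      induction n with
      | zero => rfl
      | succ m ih =>
        show h (Form.box (boxIter m (Form.var 0))) = _
        rw [hbx, ih, Function.iterate_succ_apply']
    have hAB : h B = h A := by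
      rw [hB, hA, hiter, hiter, hNK]
    have hχ : h (chiF B) = h (chiF A) := by
      show h (Form.box (Form.neg (Form.box B))) = h (Form.box (Form.neg (Form.box A)))
      rw [hbx, hbx, hn, hn, hbx, hbx, hAB]
    have hPsi : h (PsiF A B) = h (PsiF A A) := by
      show h (Form.conj ((chiF A).imp (chiF B)) ((chiF B).imp (chiF A))) =
        h (Form.conj ((chiF A).imp (chiF A)) ((chiF A).imp (chiF A)))
      simp only [Form.conj, hn, hi, hχ]
    rw [hPsi]
    exact ha ∅ (PsiF A A) hθ h ⟨hn, hi, hbx⟩ (by simp)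
  have hthm : Deriv Tm4dAx ∅ (PsiF A B) := deriv_mono hsub (hb _ hvalid)
  have hdes := deriv_sound hthm (myVal N) (myVal_isVal N) (by simp)
  have hval : myVal N (PsiF A B) = V4.Cm := by
    show neg4 (imp4 (imp4 (myVal N (chiF A)) (myVal N (chiF B)))
        (neg4 (imp4 (myVal N (chiF B)) (myVal N (chiF A))))) = V4.Cm
    rw [hA, hB, myVal_chiA, myVal_chiB N K hK]
    rfl
  rw [hval] at hdes
  exact absurd hdes (by decide)
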